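/- Let g ∈ L^∞(ℝ, ℂ). The spectrum of the Wiener–Hopf operator W(g), acting on the subspace L²((0,∞)) of L²(ℝ, ℂ), is contained in the closed convex hull of the essential range of g. -/

import Mathlib

open MeasureTheory Complex Filter Set

noncomputable section

/-- The space `L²(ℝ, ℂ)`. -/
abbrev L2Space := Lp ℂ 2 (volume : Measure ℝ)

/-- `R` is a two-sided inverse of `T` on the subspace `ran P` (the image of the
projection `P`, identified with `L²((0,∞))`), with range inside that subspace. -/
def IsInverseOn (P T R : L2Space →ₗ[ℂ] L2Space) : Prop :=
  (∀ u : L2Space, P u = u → R (T u) = u ∧ T (R u) = u) ∧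
  (∀ u : L2Space, P (R u) = R u)

/-- The essential range of `g : ℝ → ℂ`: the set of `z ∈ ℂ` such that for every
`ε > 0` the set `{x | |g x − z| < ε}` has positive Lebesgue measure. -/
def essentialRange (g : ℝ → ℂ) : Set ℂ :=
  {z : ℂ | ∀ ε : ℝ, 0 < ε → 0 < volume {x : ℝ | ‖g x - z‖ < ε}}


/-!
Separate `z` from the closed convex hull of the essential range by a real functional: there are
`c : ℂ` and `d > 0` with `d ≤ Re (c (w - z))` on the essential range, hence `d ≤ Re (c (g x - z))`
for almost every `x`. The multiplication operator by `c (g - z)`, its unitary conjugate by `𝓕`,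
and the compression of the latter to `ran P` are then coercive with constant `d`, so the
compression is invertible (Lax–Milgram); multiplied by `c`, its inverse inverts
`W(g) - z` on `ran P`.
-/

open scoped NNReal ENNReal InnerProductSpace ComplexConjugate

theorem essentialRange_eq_support_map {g : ℝ → ℂ} (hg : AEMeasurable g) :
    essentialRange g = (volume.map g).support := by
  ext z
  rw [Metric.nhds_basis_ball.mem_measureSupport]
  refine forall₂_congr fun ε _ => ?_
  rw [Measure.map_apply_of_aemeasurable hg measurableSet_ball]
  simp only [Set.preimage, Metric.mem_ball, dist_eq_norm]

theorem ae_mem_essentialRange {g : ℝ → ℂ} (hg : AEMeasurable g) :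
    ∀ᵐ x, g x ∈ essentialRange g := by
  rw [essentialRange_eq_support_map hg]
  exact ae_of_ae_map hg Measure.support_mem_ae

theorem exists_le_re_mul_sub_of_notMem_closure_convexHull {S : Set ℂ} {z : ℂ}
    (hz : z ∉ closure (convexHull ℝ S)) :
    ∃ c : ℂ, ∃ d : ℝ, 0 < d ∧ ∀ w ∈ S, d ≤ (c * (w - z)).re := by
  obtain ⟨f, s, hfz, hfS⟩ :=
    geometric_hahn_banach_point_closed (convex_convexHull ℝ S).closure isClosed_closure hz
  have hf : ∀ w : ℂ, f w = (⟨f 1, -f I⟩ * w : ℂ).re := fun w => by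
    have hw : w = w.re • (1 : ℂ) + w.im • I := by simp
    rw [hw, map_add, map_smul, map_smul]
    simp only [smul_eq_mul, mul_re, add_re, smul_re, one_re, I_re, add_im, smul_im, one_im, I_im]
    ring
  refine ⟨⟨f 1, -f I⟩, s - f z, sub_pos.mpr hfz, fun w hw => ?_⟩
  have hfw := hfS w (subset_closure (subset_convexHull ℝ S hw))
  rw [mul_sub, sub_re, ← hf, ← hf]
  linarith

section Compression

variable {𝕜 E : Type*} [RCLike 𝕜] [NormedAddCommGroup E] [InnerProductSpace 𝕜 E]

theorem Submodule.isUnit_compression_of_coercive (K : Submodule 𝕜 E) [CompleteSpace K]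
    {A : E →L[𝕜] E} {d : ℝ≥0} (hd : 0 < d) (hA : ∀ u ∈ K, ‖u‖ ^ 2 * d ≤ ‖⟪A u, u⟫_𝕜‖) :
    IsUnit (K.orthogonalProjectionOnto ∘L A ∘L K.subtypeL) :=
  ContinuousLinearMap.isUnit_of_forall_le_norm_inner_map _ hd fun u => by
    simpa [Submodule.inner_orthogonalProjectionOnto_eq_of_mem_left] using hA u u.2

theorem IsStarProjection.exists_inverseOn_range_of_coercive [CompleteSpace E]
    {P A : E →L[𝕜] E} (hP : IsStarProjection P) {d : ℝ≥0} (hd : 0 < d)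
    (hA : ∀ u, P u = u → ‖u‖ ^ 2 * d ≤ ‖⟪A u, u⟫_𝕜‖) :
    ∃ R : E →L[𝕜] E, (∀ u, P u = u → R (P (A u)) = u ∧ P (A (R u)) = u) ∧
      ∀ u, P (R u) = R u := by
  obtain ⟨K, _, rfl⟩ := isStarProjection_iff_eq_starProjection.mp hP
  have : CompleteSpace K := by
    have hK := ContinuousLinearMap.IsIdempotentElem.isClosed_range hP.isIdempotentElem
    rw [K.range_starProjection] at hK
    exact hK.completeSpace_coe
  obtain ⟨S, hS⟩ := K.isUnit_compression_of_coercive hd fun u hu =>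
    hA u (K.starProjection_eq_self_iff.2 hu)
  let e := ContinuousLinearEquiv.unitsEquiv 𝕜 K S
  have he : ∀ v : K, e v = K.orthogonalProjectionOnto (A v) := fun v => by
    simp [e, hS]
  refine ⟨K.subtypeL ∘L (e.symm : K →L[𝕜] K) ∘L K.orthogonalProjectionOnto,
    fun u hu => ⟨?_, ?_⟩, fun u => ?_⟩
  · have hu' := K.starProjection_eq_self_iff.1 hu
    simp [K.starProjection_apply, ← he ⟨u, hu'⟩]
  · have := congrArg Subtype.val (e.apply_symm_apply (K.orthogonalProjectionOnto u))
    rw [he] at this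
    simpa [hu] using this
  · simp

end Compression

section MultiplicationOperator

variable {α : Type*} [MeasurableSpace α] {μ : Measure α}

theorem MeasureTheory.MemLp.exists_ae_norm_le {g : α → ℂ} (hg : MemLp g ⊤ μ) :
    ∃ C : ℝ≥0, ∀ᵐ x ∂μ, ‖g x‖ ≤ C := by
  have := hg.2
  rw [eLpNorm_exponent_top, eLpNormEssSup_lt_top_iff_isBoundedUnder] at this
  obtain ⟨C, hC⟩ := this
  exact ⟨C, hC.mono fun x hx => hx⟩

theorem MeasureTheory.Lp.norm_le_of_ae_eq_mul {p : ℝ≥0∞} {u v : Lp ℂ p μ} {h : α → ℂ} {C : ℝ}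
    (hv : v =ᵐ[μ] fun x => h x * u x) (hh : ∀ᵐ x ∂μ, ‖h x‖ ≤ C) : ‖v‖ ≤ C * ‖u‖ :=
  Lp.norm_le_mul_norm_of_ae_le_mul <| by
    filter_upwards [hv, hh] with x hvx hhx
    rw [hvx, norm_mul]
    exact mul_le_mul_of_nonneg_right hhx (norm_nonneg _)

theorem L2.mul_norm_sq_le_re_inner_of_ae_eq_mul {u v : Lp ℂ 2 μ} {h : α → ℂ} {d : ℝ}
    (hv : v =ᵐ[μ] fun x => h x * u x) (hh : ∀ᵐ x ∂μ, d ≤ (h x).re) :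
    d * ‖u‖ ^ 2 ≤ (⟪u, v⟫_ℂ).re := by
  have hnonneg : 0 ≤ (⟪u, v - (d : ℂ) • u⟫_ℂ).re := by
    rw [L2.inner_def, ← RCLike.re_eq_complex_re, ← integral_re (L2.integrable_inner _ _)]
    refine integral_nonneg_of_ae ?_
    filter_upwards [hv, hh, Lp.coeFn_sub v ((d : ℂ) • u), Lp.coeFn_smul (d : ℂ) u]
      with x hvx hhx hsub hsmul
    have : conj (u x) * (h x * u x - d * u x) = (h x - d) * (‖u x‖ ^ 2 : ℝ) := by
      rw [ofReal_pow, ← conj_mul']; ring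
    rw [hsub, Pi.sub_apply, hsmul, hvx, Pi.smul_apply, smul_eq_mul, RCLike.inner_apply', this]
    simp only [RCLike.re_to_complex, re_mul_ofReal, sub_re, ofReal_re]
    exact mul_nonneg (sub_nonneg.2 hhx) (sq_nonneg _)
  rw [inner_sub_right, inner_smul_right, inner_self_eq_norm_sq_to_K, sub_re] at hnonneg
  simpa [← ofReal_pow] using hnonneg

theorem MeasureTheory.Lp.ae_eq_smul_sub_smul_one {p : ℝ≥0∞} [Fact (1 ≤ p)]
    {M : Lp ℂ p μ →L[ℂ] Lp ℂ p μ} {g : α → ℂ} (hM : ∀ u, M u =ᵐ[μ] fun x => g x * u x)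
    (c z : ℂ) (u : Lp ℂ p μ) :
    (c • (M - z • 1)) u =ᵐ[μ] fun x => c * (g x - z) * u x := by
  filter_upwards [Lp.coeFn_smul c (M u - z • u), Lp.coeFn_sub (M u) (z • u),
    Lp.coeFn_smul z u, hM u] with x h1 h2 h3 h4
  rw [show (c • (M - z • 1)) u = c • (M u - z • u) from rfl, h1, Pi.smul_apply, h2,
    Pi.sub_apply, h3, Pi.smul_apply, h4, smul_eq_mul, smul_eq_mul]
  ring

variable {p : α → Prop} [DecidablePred p] {P : Lp ℂ 2 μ →ₗ[ℂ] Lp ℂ 2 μ}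

theorem exists_isStarProjection_of_ae_eq_ite
    (hP : ∀ u, P u =ᵐ[μ] fun x => if p x then u x else 0) :
    ∃ Q : Lp ℂ 2 μ →L[ℂ] Lp ℂ 2 μ,
      (Q : Lp ℂ 2 μ →ₗ[ℂ] Lp ℂ 2 μ) = P ∧ IsStarProjection Q := by
  have hle : ∀ u, ‖P u‖ ≤ 1 * ‖u‖ := fun u => by
    rw [one_mul]
    refine Lp.norm_le_norm_of_ae_le ?_
    filter_upwards [hP u] with x hx
    rw [hx]; split_ifs <;> simp
  refine ⟨P.mkContinuous 1 hle, rfl, (isStarProjection_iff _).2 ⟨?_, ?_⟩⟩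
  · ext1 u
    show P (P u) = P u
    refine Lp.ext ?_
    filter_upwards [hP (P u), hP u] with x hPPx hPx
    rw [hPPx, hPx]; split_ifs <;> rfl
  · rw [ContinuousLinearMap.isSelfAdjoint_iff_isSymmetric]
    intro u v
    simp only [ContinuousLinearMap.coe_coe, LinearMap.mkContinuous_apply]
    rw [L2.inner_def, L2.inner_def]
    refine integral_congr_ae ?_
    filter_upwards [hP u, hP v] with x hu hv
    rw [hu, hv]; split_ifs <;> simp

end MultiplicationOperator

theorem IsInverseOn.smul {P S T R : L2Space →ₗ[ℂ] L2Space} {c : ℂ} (h : IsInverseOn P S R)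
    (hST : ∀ u, P u = u → S u = c • T u) : IsInverseOn P T (c • R) := by
  obtain ⟨hinv, hran⟩ := h
  refine ⟨fun u hu => ⟨?_, ?_⟩, fun u => by simp [hran]⟩
  · rw [LinearMap.smul_apply, ← map_smul, ← hST u hu, (hinv u hu).1]
  · rw [LinearMap.smul_apply, map_smul, ← hST _ (hran u), (hinv u hu).2]

theorem wiener_hopf_spectrum_subset_convex_hull_general
    (g : ℝ → ℂ) (hg : MemLp g ⊤ (volume : Measure ℝ))
    (𝓕 : L2Space ≃ₗᵢ[ℂ] L2Space)
    (Mg : L2Space →ₗ[ℂ] L2Space)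
    (hMg : ∀ u : L2Space, (Mg u : ℝ → ℂ) =ᵐ[volume] fun x : ℝ => g x * u x)
    (P : L2Space →ₗ[ℂ] L2Space)
    (hP : ∀ u : L2Space, (P u : ℝ → ℂ) =ᵐ[volume]
      fun x : ℝ => if 0 < x then u x else 0) :
    ∀ z : ℂ, z ∉ closure (convexHull ℝ (essentialRange g)) →
      ∃ R : L2Space →ₗ[ℂ] L2Space,
        (∃ c : ℝ, ∀ u : L2Space, ‖R u‖ ≤ c * ‖u‖) ∧
        IsInverseOn P
          (P ∘ₗ (𝓕.symm.toLinearEquiv.toLinearMap ∘ₗ Mg ∘ₗ 𝓕.toLinearEquiv.toLinearMap) ∘ₗ P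
            - z • LinearMap.id) R := by
  intro z hz
  obtain ⟨c, d, hd, hcd⟩ := exists_le_re_mul_sub_of_notMem_closure_convexHull hz
  lift d to ℝ≥0 using hd.le
  have hgz : ∀ᵐ x, (d : ℝ) ≤ (c * (g x - z)).re :=
    (ae_mem_essentialRange hg.1.aemeasurable).mono fun x hx => hcd _ hx
  obtain ⟨C, hC⟩ := hg.exists_ae_norm_le
  let M : L2Space →L[ℂ] L2Space :=
    Mg.mkContinuous C fun u => Lp.norm_le_of_ae_eq_mul (hMg u) hC
  let A : L2Space →L[ℂ] L2Space :=
    (𝓕.symm : L2Space →L[ℂ] L2Space) ∘L (c • (M - z • 1)) ∘L (𝓕 : L2Space →L[ℂ] L2Space)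
  have hA : ∀ u, ‖u‖ ^ 2 * d ≤ ‖⟪A u, u⟫_ℂ‖ := fun u => by
    have hFA : 𝓕 (A u) = (c • (M - z • 1)) (𝓕 u) := by simp [A]
    calc ‖u‖ ^ 2 * d = d * ‖𝓕 u‖ ^ 2 := by rw [𝓕.norm_map, mul_comm]
      _ ≤ (⟪𝓕 u, 𝓕 (A u)⟫_ℂ).re := hFA ▸ L2.mul_norm_sq_le_re_inner_of_ae_eq_mul
          (Lp.ae_eq_smul_sub_smul_one (M := M) hMg c z (𝓕 u)) hgz
      _ ≤ ‖⟪A u, u⟫_ℂ‖ := by rw [𝓕.inner_map_map, norm_inner_symm]; exact re_le_norm _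
  obtain ⟨Q, rfl, hQ⟩ := exists_isStarProjection_of_ae_eq_ite hP
  obtain ⟨R, hR⟩ :=
    hQ.exists_inverseOn_range_of_coercive (by exact_mod_cast hd) fun u _ => hA u
  refine ⟨c • R, ⟨‖c • R‖, (c • R).le_opNorm⟩, IsInverseOn.smul
    (S := (Q : L2Space →ₗ[ℂ] L2Space) ∘ₗ (A : L2Space →ₗ[ℂ] L2Space)) hR ?_⟩
  intro u (hu : Q u = u)
  simp [A, M, hu]

/-- Let `g ∈ L^∞(ℝ, ℂ)`.  The spectrum of the Wiener–Hopf operator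
`W(g) = P 𝓕⁻¹ M_g 𝓕 P`, acting on the subspace `L²((0,∞))` of `L²(ℝ, ℂ)` (the range
of the projection `P` of multiplication by the indicator of `(0,∞)`), is contained
in the closed convex hull of the essential range of `g`: every `z` outside that
closed convex hull lies in the resolvent set, i.e. `W(g) − z I` is invertible with a
bounded inverse on `L²((0,∞))`. -/
theorem wiener_hopf_spectrum_subset_convex_hull
    (g : ℝ → ℂ) (hg : MemLp g ⊤ (volume : Measure ℝ))
    (𝓕 : L2Space ≃ₗᵢ[ℂ] L2Space)
    (h𝓕 : ∀ (u : ℝ → ℂ) (_ : Integrable u (volume : Measure ℝ))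
      (hu2 : MemLp u 2 (volume : Measure ℝ)),
      (𝓕 (hu2.toLp u) : ℝ → ℂ) =ᵐ[volume]
        fun x : ℝ => (((2 * Real.pi : ℝ) ^ (-(1 : ℝ) / 2) : ℝ) : ℂ) *
          ∫ t : ℝ, u t * Complex.exp (-Complex.I * (x : ℂ) * (t : ℂ)))
    (Mg : L2Space →ₗ[ℂ] L2Space)
    (hMg : ∀ u : L2Space, (Mg u : ℝ → ℂ) =ᵐ[volume] fun x : ℝ => g x * u x)
    (P : L2Space →ₗ[ℂ] L2Space)
    (hP : ∀ u : L2Space, (P u : ℝ → ℂ) =ᵐ[volume]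
      fun x : ℝ => if 0 < x then u x else 0) :
    ∀ z : ℂ, z ∉ closure (convexHull ℝ (essentialRange g)) →
      ∃ R : L2Space →ₗ[ℂ] L2Space,
        (∃ c : ℝ, ∀ u : L2Space, ‖R u‖ ≤ c * ‖u‖) ∧
        IsInverseOn P
          (P ∘ₗ (𝓕.symm.toLinearEquiv.toLinearMap ∘ₗ Mg ∘ₗ 𝓕.toLinearEquiv.toLinearMap) ∘ₗ P
            - z • LinearMap.id) R :=
  wiener_hopf_spectrum_subset_convex_hull_general g hg 𝓕 Mg hMg P hP
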